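/- For every 2×2×2 array X with entries in {0,1}, the Boolean rank of X (addition: 1+1=1) equals the non-negative integer rank of X (sums of outer products over ℕ, so that no two summands may have a 1 in the same position). -/
import Mathlib

/-- The Boolean outer product of `n` vectors in `{0,1}^2` (entrywise AND). -/
noncomputable def bOuter (n : ℕ) (v : Fin n → Fin 2 → Bool) : (Fin n → Fin 2) → Bool :=
  fun i => Finset.univ.inf fun j => v j (i j)

/-- `X` is the entrywise OR of `R` Boolean outer products. -/
def bHasRankLE (n R : ℕ) (X : (Fin n → Fin 2) → Bool) : Prop :=
  ∃ v : Fin R → Fin n → Fin 2 → Bool,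
    X = fun i => Finset.univ.sup fun r => bOuter n (v r) i

/-- The Boolean rank of a `2×⋯×2` array of zeros and ones. -/
noncomputable def boolRank (n : ℕ) (X : (Fin n → Fin 2) → Bool) : ℕ :=
  sInf {R | bHasRankLE n R X}

/-- The non-negative integer rank: minimal `R` such that `X`, viewed in `ℕ`,
is the sum over `ℕ` of `R` outer products of 0-1 vectors. -/
noncomputable def natRank (n : ℕ) (X : (Fin n → Fin 2) → Bool) : ℕ :=
  sInf {R | ∃ v : Fin R → Fin n → Fin 2 → Bool,
    ∀ i, (X i).toNat = ∑ r, ∏ j, (v r j (i j)).toNat}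

set_option maxRecDepth 100000
def prL : List Nat :=
  [0,1,1,1,1,1,2,2,1,2,1,2,1,2,2,1,1,1,2,2,2,2,3,3,2,2,2,2,2,2,3,2,1,2,1,2,2,2,2,2,2,3,2,3,2,3,2,2,1,2,2,1,2,2,3,2,2,3,2,2,2,3,3,2,1,2,2,2,1,2,2,2,2,3,2,3,2,3,2,2,1,2,2,2,2,1,3,2,2,3,2,3,2,2,3,2,2,3,2,3,2,3,2,3,3,4,3,4,3,4,3,3,2,3,2,2,2,2,3,2,3,4,3,3,3,3,3,3,1,2,2,2,2,2,3,3,1,2,2,2,2,2,3,2,2,2,3,3,3,3,4,4,2,2,3,3,3,3,4,3,1,2,2,2,2,2,3,3,2,3,1,2,2,3,2,2,2,2,3,2,3,3,4,3,2,3,2,2,3,3,3,3,1,2,2,2,2,2,3,3,2,3,2,3,1,2,2,2,2,2,3,3,3,2,4,3,2,3,3,3,2,2,3,3,2,3,2,3,2,3,3,3,3,4,2,3,2,3,2,3,1,2,2,2,2,2,3,3,2,3,2,3,2,3,3,1]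

def wL : List (List Nat) :=
  [[0,0,0,0],[21,0,0,0],[22,0,0,0],[23,0,0,0],[25,0,0,0],[29,0,0,0],[25,22,0,0],[29,22,0,0],[26,0,0,0],[26,21,0,0],[30,0,0,0],[30,21,0,0],[27,0,0,0],[29,26,0,0],[30,25,0,0],[31,0,0,0],[37,0,0,0],[53,0,0,0],[37,22,0,0],[53,22,0,0],[37,25,0,0],[53,25,0,0],[37,25,22,0],[53,25,22,0],[37,26,0,0],[53,26,0,0],[37,30,0,0],[53,30,0,0],[37,27,0,0],[53,27,0,0],[37,30,25,0],[37,31,0,0],[38,0,0,0],[38,21,0,0],[54,0,0,0],[54,21,0,0],[38,25,0,0],[38,29,0,0],[54,25,0,0],[54,29,0,0],[38,26,0,0],[38,26,21,0],[54,26,0,0],[54,26,21,0],[38,27,0,0],[38,29,26,0],[54,27,0,0],[38,31,0,0],[39,0,0,0],[53,38,0,0],[54,37,0,0],[55,0,0,0],[39,25,0,0],[39,29,0,0],[54,25,37,0],[55,25,0,0],[39,26,0,0],[53,26,38,0],[39,30,0,0],[55,26,0,0],[39,27,0,0],[39,29,26,0],[39,30,25,0],[55,27,0,0],[41,0,0,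0],[41,21,0,0],[41,22,0,0],[41,23,0,0],[57,0,0,0],[57,21,0,0],[57,22,0,0],[57,23,0,0],[41,26,0,0],[41,26,21,0],[41,30,0,0],[41,30,21,0],[57,26,0,0],[57,26,21,0],[57,30,0,0],[41,31,0,0],[45,0,0,0],[53,41,0,0],[45,22,0,0],[45,23,0,0],[57,37,0,0],[61,0,0,0],[57,37,22,0],[61,22,0,0],[45,26,0,0],[53,26,41,0],[45,30,0,0],[53,30,41,0],[45,27,0,0],[61,26,0,0],[57,30,37,0],[61,30,0,0],[41,38,0,0],[41,38,21,0],[54,41,0,0],[54,41,21,0],[57,38,0,0],[57,38,21,0],[57,54,0,0],[57,54,21,0],[41,38,26,0],[41,38,26,21],[54,41,26,0],[54,41,26,21],[57,38,26,0],[57,38,26,21],[57,54,26,0],[41,38,31,0],[45,38,0,0],[45,38,21,0],[54,45,0,0],[55,41,0,0],[57,39,0,0],[61,38,0,0],[57,54,37,0],[61,54,0,0],[45,38,26,0],[45,38,26,21],[54,45,26,0],[55,41,26,0],[57,39,26,0],[61,38,26,0],[54,45,27,0],[61,54,26,0],[42,0,0,0],[42,21,0,0],[42,22,0,0],[42,2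3,0,0],[42,25,0,0],[42,29,0,0],[42,25,22,0],[42,29,22,0],[58,0,0,0],[58,21,0,0],[58,22,0,0],[58,23,0,0],[58,25,0,0],[58,29,0,0],[58,25,22,0],[42,31,0,0],[42,37,0,0],[53,42,0,0],[42,37,22,0],[53,42,22,0],[42,37,25,0],[53,42,25,0],[42,37,25,22],[53,42,25,22],[58,37,0,0],[58,53,0,0],[58,37,22,0],[58,53,22,0],[58,37,25,0],[58,53,25,0],[58,37,25,22],[42,37,31,0],[46,0,0,0],[46,21,0,0],[54,42,0,0],[46,23,0,0],[46,25,0,0],[46,29,0,0],[54,25,42,0],[54,29,42,0],[58,38,0,0],[58,38,21,0],[62,0,0,0],[62,21,0,0],[46,27,0,0],[58,29,38,0],[62,25,0,0],[62,29,0,0],[46,37,0,0],[53,46,0,0],[46,37,22,0],[55,42,0,0],[46,37,25,0],[53,46,25,0],[46,37,25,22],[55,42,25,0],[58,39,0,0],[58,53,38,0],[62,37,0,0],[62,53,0,0],[58,39,25,0],[53,46,27,0],[62,37,25,0],[62,53,25,0],[43,0,0,0],[43,21,0,0],[43,22,0,0],[43,23,0,0],[57,42,0,0],[43,29,0,0]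,[57,42,22,0],[43,29,22,0],[58,41,0,0],[58,41,21,0],[43,30,0,0],[43,30,21,0],[59,0,0,0],[59,21,0,0],[59,22,0,0],[59,23,0,0],[45,42,0,0],[53,43,0,0],[45,42,22,0],[53,43,22,0],[45,42,25,0],[61,42,0,0],[45,42,25,22],[61,42,22,0],[58,45,0,0],[58,53,41,0],[58,45,22,0],[58,45,23,0],[59,37,0,0],[61,58,0,0],[59,37,22,0],[61,58,22,0],[46,41,0,0],[46,41,21,0],[54,43,0,0],[54,43,21,0],[57,46,0,0],[57,46,21,0],[57,54,42,0],[57,46,23,0],[46,41,26,0],[46,41,26,21],[62,41,0,0],[62,41,21,0],[59,38,0,0],[59,38,21,0],[62,57,0,0],[62,57,21,0],[47,0,0,0],[47,21,0,0],[47,22,0,0],[55,43,0,0],[47,25,0,0],[61,46,0,0],[47,25,22,0],[61,54,42,0],[47,26,0,0],[47,26,21,0],[62,45,0,0],[62,53,41,0],[59,39,0,0],[61,58,38,0],[62,57,37,0],[63,0,0,0]]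

def sL : List (List Nat) :=
  [[0,0,0,0],[0,0,0,0],[1,0,0,0],[0,0,0,0],[2,0,0,0],[0,0,0,0],[1,2,0,0],[1,2,0,0],[3,0,0,0],[0,3,0,0],[1,0,0,0],[0,3,0,0],[2,0,0,0],[0,3,0,0],[1,2,0,0],[0,0,0,0],[4,0,0,0],[0,0,0,0],[1,4,0,0],[1,4,0,0],[2,4,0,0],[2,4,0,0],[1,2,4,0],[1,2,4,0],[3,4,0,0],[0,3,0,0],[1,4,0,0],[0,3,0,0],[2,4,0,0],[0,3,0,0],[1,2,4,0],[1,4,0,0],[5,0,0,0],[0,5,0,0],[1,0,0,0],[0,5,0,0],[2,5,0,0],[0,5,0,0],[1,2,0,0],[0,5,0,0],[3,5,0,0],[0,3,5,0],[3,5,0,0],[0,3,5,0],[2,5,0,0],[0,3,5,0],[1,2,0,0],[0,5,0,0],[4,0,0,0],[0,5,0,0],[1,4,0,0],[0,0,0,0],[2,4,0,0],[0,5,0,0],[1,2,4,0],[1,2,0,0],[3,4,0,0],[0,3,5,0],[1,4,0,0],[0,3,0,0],[2,4,0,0],[0,3,5,0],[1,2,4,0],[2,4,0,0],[6,0,0,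0],[0,6,0,0],[1,6,0,0],[0,6,0,0],[2,0,0,0],[0,6,0,0],[1,2,0,0],[0,6,0,0],[3,6,0,0],[0,3,6,0],[1,6,0,0],[0,3,6,0],[3,6,0,0],[0,3,6,0],[1,2,0,0],[0,6,0,0],[4,0,0,0],[0,6,0,0],[1,4,0,0],[0,6,0,0],[2,4,0,0],[0,0,0,0],[1,2,4,0],[1,2,0,0],[3,4,0,0],[0,3,6,0],[1,4,0,0],[0,3,6,0],[2,4,0,0],[0,3,0,0],[1,2,4,0],[1,4,0,0],[5,6,0,0],[0,5,6,0],[1,6,0,0],[0,5,6,0],[2,5,0,0],[0,5,6,0],[1,2,0,0],[0,5,6,0],[3,5,6,0],[0,3,5,6],[3,5,6,0],[0,3,5,6],[3,5,6,0],[0,3,5,6],[3,5,6,0],[0,5,6,0],[5,6,0,0],[0,5,6,0],[1,4,0,0],[0,6,0,0],[2,4,0,0],[0,5,0,0],[1,2,4,0],[1,2,0,0],[3,5,6,0],[0,3,5,6],[3,5,6,0],[0,3,6,0],[3,5,6,0],[0,3,5,0],[1,2,4,0],[3,5,6,0],[7,0,0,0],[0,7,0,0],[1,7,0,0],[0,7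,0,0],[2,7,0,0],[0,7,0,0],[1,2,7,0],[1,2,7,0],[3,0,0,0],[0,3,0,0],[1,7,0,0],[0,3,0,0],[2,7,0,0],[0,3,0,0],[1,2,7,0],[0,7,0,0],[4,7,0,0],[0,7,0,0],[1,4,7,0],[1,4,7,0],[2,4,7,0],[2,4,7,0],[1,2,4,7],[1,2,4,7],[3,4,0,0],[0,3,0,0],[1,4,7,0],[1,4,7,0],[2,4,7,0],[2,4,7,0],[1,2,4,7],[1,4,7,0],[5,0,0,0],[0,5,0,0],[1,7,0,0],[0,5,0,0],[2,5,0,0],[0,5,0,0],[1,2,7,0],[1,2,7,0],[3,5,0,0],[0,3,5,0],[1,0,0,0],[0,3,0,0],[2,5,0,0],[0,3,5,0],[1,2,0,0],[0,5,0,0],[4,7,0,0],[0,5,0,0],[1,4,7,0],[0,7,0,0],[2,4,7,0],[2,4,7,0],[1,2,4,7],[1,2,7,0],[3,4,0,0],[0,3,5,0],[1,4,0,0],[0,3,0,0],[2,4,7,0],[0,3,5,0],[1,2,4,0],[2,4,7,0],[6,0,0,0],[0,6,0,0],[1,6,0,0],[0,6,0,0],[2,7,0,0],[0,6,0,0],[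1,2,7,0],[1,2,7,0],[3,6,0,0],[0,3,6,0],[1,6,0,0],[0,3,6,0],[2,0,0,0],[0,3,0,0],[1,2,0,0],[0,6,0,0],[4,7,0,0],[0,6,0,0],[1,4,7,0],[1,4,7,0],[2,4,7,0],[0,7,0,0],[1,2,4,7],[1,2,7,0],[3,4,0,0],[0,3,6,0],[1,4,7,0],[0,3,6,0],[2,4,0,0],[0,3,0,0],[1,2,4,0],[1,4,7,0],[5,6,0,0],[0,5,6,0],[1,6,0,0],[0,5,6,0],[2,5,0,0],[0,5,6,0],[1,2,7,0],[0,5,6,0],[3,5,6,0],[0,3,5,6],[1,6,0,0],[0,3,6,0],[2,5,0,0],[0,3,5,0],[1,2,0,0],[0,5,6,0],[4,0,0,0],[0,5,0,0],[1,4,0,0],[0,6,0,0],[2,4,0,0],[0,5,0,0],[1,2,4,0],[1,2,7,0],[3,4,0,0],[0,3,5,0],[1,4,0,0],[0,3,6,0],[2,4,0,0],[0,3,5,0],[1,2,4,0],[0,0,0,0]]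
abbrev Pt := Fin 3 → Fin 2
def prT (m : ℕ) : ℕ := prL.getD m 0
def wT (m r : ℕ) : ℕ := (wL.getD m []).getD r 0
def sT (m a : ℕ) : ℕ := (sL.getD m []).getD a 0
def decB (n : ℕ) : Fin 3 → Fin 2 → Bool := fun j c => Nat.testBit n (2 * j.val + c.val)
def decP (k : ℕ) : Pt := fun j => if Nat.testBit k j.val then 1 else 0
def pidx (p : Pt) : ℕ := (p 0).val + 2 * (p 1).val + 4 * (p 2).val
def decX (m : ℕ) : Pt → Bool := fun p => Nat.testBit m (pidx p)

lemma L1 : ∀ m : Fin 256, prT m.val ≤ 4 := by decide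
lemma L3 : ∀ m : Fin 256, ∀ r : Fin 4, prT m.val ≤ r.val → wT m.val r.val = 0 := by decide
lemma L4 : ∀ m : Fin 256, (wL.getD m.val []).length ≤ 4 := by decide
lemma L5 : ∀ m : Fin 256, ∀ a : Fin 4, a.val < prT m.val →
    decX m.val (decP (sT m.val a.val)) = true := by decide
lemma L2 : ∀ m : Fin 256, ∀ p : Pt,
    (decX m.val p).toNat = ∑ r : Fin 4, ∏ j : Fin 3, (decB (wT m.val r.val) j (p j)).toNat := by
  decide
lemma L6 : ∀ m : Fin 256, ∀ a b : Fin 4, a.val < b.val → b.val < prT m.val →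
    ∃ p : Pt, (∀ j, p j = decP (sT m.val a.val) j ∨ p j = decP (sT m.val b.val) j) ∧
      decX m.val p = false := by decide
lemma pidx_lt : ∀ p : Pt, pidx p < 8 := by decide
lemma decP_pidx : ∀ p : Pt, decP (pidx p) = p := by decide
lemma testBit_sum : ∀ b : Fin 8 → Bool, ∀ t : Fin 8,
    Nat.testBit (∑ k : Fin 8, (b k).toNat * 2 ^ k.val) t.val = b t := by decide
def enc (X : Pt → Bool) : ℕ := ∑ k : Fin 8, (X (decP k.val)).toNat * 2 ^ k.val

lemma enc_lt (X : Pt → Bool) : enc X < 256 := by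
  have h : enc X ≤ ∑ k : Fin 8, 1 * 2 ^ k.val := by
    refine Finset.sum_le_sum fun k _ => Nat.mul_le_mul_right _ ?_
    cases X (decP k.val) <;> simp
  have h2 : ∑ k : Fin 8, 1 * 2 ^ k.val = 255 := by decide
  omega

def mX (X : Pt → Bool) : Fin 256 := ⟨enc X, enc_lt X⟩

lemma decX_enc (X : Pt → Bool) : decX (enc X) = X := by
  funext p
  have h := testBit_sum (fun k => X (decP k.val)) ⟨pidx p, pidx_lt p⟩
  simpa [decX, enc, decP_pidx p] using h

lemma wT_zero (m : Fin 256) (r : ℕ) (h : prT m.val ≤ r) : wT m.val r = 0 := by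
  rcases lt_or_ge r 4 with h4 | h4
  · exact L3 m ⟨r, h4⟩ h
  · unfold wT
    exact List.getD_eq_default _ _ (le_trans (L4 m) h4)

lemma prod_decB_zero (p : Pt) : (∏ j : Fin 3, (decB 0 j (p j)).toNat) = 0 := by
  refine Finset.prod_eq_zero (Finset.mem_univ 0) ?_
  simp [decB]

lemma sum_table (X : Pt → Bool) (N : ℕ) (hN : prT (enc X) ≤ N) (p : Pt) :
    (X p).toNat = ∑ r ∈ Finset.range N, ∏ j : Fin 3, (decB (wT (enc X) r) j (p j)).toNat := by
  have key : ∀ M, prT (enc X) ≤ M →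
      (∑ r ∈ Finset.range M, ∏ j : Fin 3, (decB (wT (enc X) r) j (p j)).toNat)
      = ∑ r ∈ Finset.range (prT (enc X)), ∏ j : Fin 3, (decB (wT (enc X) r) j (p j)).toNat := by
    intro M hM
    refine (Finset.sum_subset (Finset.range_subset_range.mpr hM) ?_).symm
    intro x _ hx
    have hx' : prT (enc X) ≤ x := le_of_not_gt (fun hc => hx (Finset.mem_range.mpr hc))
    rw [show wT (enc X) x = 0 from wT_zero (mX X) x hx']
    exact prod_decB_zero p
  have h4 := L2 (mX X) p
  have hXp : decX (mX X).val p = X p := by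
    show decX (enc X) p = X p
    rw [decX_enc]
  calc (X p).toNat = (decX (mX X).val p).toNat := by rw [hXp]
    _ = ∑ r : Fin 4, ∏ j : Fin 3, (decB (wT (enc X) r.val) j (p j)).toNat := h4
    _ = ∑ r ∈ Finset.range 4, ∏ j : Fin 3, (decB (wT (enc X) r) j (p j)).toNat :=
        Fin.sum_univ_eq_sum_range (fun r => ∏ j : Fin 3, (decB (wT (enc X) r) j (p j)).toNat) 4
    _ = ∑ r ∈ Finset.range (prT (enc X)), ∏ j : Fin 3, (decB (wT (enc X) r) j (p j)).toNat :=
        key 4 (L1 (mX X))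
    _ = ∑ r ∈ Finset.range N, ∏ j : Fin 3, (decB (wT (enc X) r) j (p j)).toNat :=
        (key N hN).symm

lemma bOuter_true_iff {v : Fin 3 → Fin 2 → Bool} {p : Pt} :
    bOuter 3 v p = true ↔ ∀ j, v j (p j) = true := by
  constructor
  · intro h j
    exact (Finset.inf_eq_top_iff (fun j => v j (p j)) Finset.univ).mp h j (Finset.mem_univ j)
  · intro h
    exact (Finset.inf_eq_top_iff (fun j => v j (p j)) Finset.univ).mpr fun j _ => h j

lemma sup_true {R : ℕ} {f : Fin R → Bool} (r : Fin R) (h : f r = true) :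
    Finset.univ.sup f = true := by
  have hle := Finset.le_sup (f := f) (Finset.mem_univ r)
  rw [h] at hle
  exact le_antisymm (Bool.le_true _) hle

lemma lower (X : Pt → Bool) (R : ℕ) (h : bHasRankLE 3 R X) : prT (enc X) ≤ R := by
  obtain ⟨v, hv⟩ := h
  set k := prT (enc X) with hk
  have hk4 : k ≤ 4 := L1 (mX X)
  have hXsup : ∀ p : Pt, X p = Finset.univ.sup fun r => bOuter 3 (v r) p := fun p =>
    congrFun hv p
  have hS : ∀ a : Fin k, X (decP (sT (enc X) a.val)) = true := by
    intro a
    have h5 := L5 (mX X) ⟨a.val, lt_of_lt_of_le a.isLt hk4⟩ a.isLt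
    have : decX (enc X) (decP (sT (enc X) a.val)) = true := h5
    rwa [decX_enc] at this
  have hex : ∀ a : Fin k, ∃ r : Fin R, bOuter 3 (v r) (decP (sT (enc X) a.val)) = true := by
    intro a
    by_contra hc
    push_neg at hc
    have hfalse : X (decP (sT (enc X) a.val)) = false := by
      rw [hXsup]
      refine (Finset.sup_eq_bot_iff _ _).mpr fun r _ => ?_
      cases hb : bOuter 3 (v r) (decP (sT (enc X) a.val))
      · rfl
      · exact absurd hb (hc r)
    rw [hS a] at hfalse
    simp at hfalse
  choose g hg using hex
  have hpair : ∀ a b : Fin k, a.val < b.val → g a ≠ g b := by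
    intro a b hab hgab
    obtain ⟨p, hp, hpf⟩ := L6 (mX X) ⟨a.val, lt_of_lt_of_le a.isLt hk4⟩
      ⟨b.val, lt_of_lt_of_le b.isLt hk4⟩ hab b.isLt
    have ha := bOuter_true_iff.mp (hg a)
    have hb := bOuter_true_iff.mp (hg b)
    rw [← hgab] at hb
    have hbp : bOuter 3 (v (g a)) p = true := by
      refine bOuter_true_iff.mpr fun j => ?_
      rcases hp j with h' | h'
      · rw [h']; exact ha j
      · rw [h']; exact hb j
    have hXp : X p = true := by
      rw [hXsup]; exact sup_true (g a) hbp
    have hpf' : X p = false := by rw [← decX_enc X]; exact hpf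
    rw [hXp] at hpf'
    simp at hpf'
  have hginj : Function.Injective g := by
    intro a b hab
    by_contra hne
    have hne' : a.val ≠ b.val := fun h => hne (Fin.ext h)
    rcases hne'.lt_or_gt with hlt | hlt
    · exact hpair a b hlt hab
    · exact hpair b a hlt hab.symm
  simpa using Fintype.card_le_of_injective g hginj

lemma cover_mem (X : Pt → Bool) (R : ℕ) (h : bHasRankLE 3 R X) :
    ∃ v : Fin R → Fin 3 → Fin 2 → Bool, ∀ i, (X i).toNat = ∑ r, ∏ j, (v r j (i j)).toNat := by
  refine ⟨fun r => decB (wT (enc X) r.val), fun i => ?_⟩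
  rw [Fin.sum_univ_eq_sum_range (fun r => ∏ j, (decB (wT (enc X) r) j (i j)).toNat) R]
  exact sum_table X R (lower X R h) i

lemma part_mem (X : Pt → Bool) (R : ℕ)
    (h : ∃ v : Fin R → Fin 3 → Fin 2 → Bool, ∀ i, (X i).toNat = ∑ r, ∏ j, (v r j (i j)).toNat) :
    bHasRankLE 3 R X := by
  obtain ⟨v, hv⟩ := h
  refine ⟨v, funext fun i => ?_⟩
  cases hXi : X i
  · have hsum : (∑ r, ∏ j, (v r j (i j)).toNat) = 0 := by
      rw [← hv i, hXi]; rfl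
    have hterm := Finset.sum_eq_zero_iff.mp hsum
    symm
    refine (Finset.sup_eq_bot_iff _ _).mpr fun r _ => ?_
    cases hb : bOuter 3 (v r) i
    · rfl
    · exfalso
      have hall := bOuter_true_iff.mp hb
      have : (∏ j, (v r j (i j)).toNat) = 1 :=
        Finset.prod_eq_one fun j _ => by rw [hall j]; rfl
      have h0 := hterm r (Finset.mem_univ r)
      omega
  · have hsum : (∑ r, ∏ j, (v r j (i j)).toNat) = 1 := by
      rw [← hv i, hXi]; rfl
    have hne : (∑ r, ∏ j, (v r j (i j)).toNat) ≠ 0 := by omega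
    obtain ⟨r, _, hr⟩ := Finset.exists_ne_zero_of_sum_ne_zero hne
    have hall : ∀ j, v r j (i j) = true := by
      intro j
      have := (Finset.prod_ne_zero_iff.mp hr) j (Finset.mem_univ j)
      cases hb : v r j (i j)
      · rw [hb] at this; exact absurd rfl this
      · rfl
    symm
    exact sup_true r (bOuter_true_iff.mpr hall)

theorem boolean_rank_eq_integer_rank_222 (X : (Fin 3 → Fin 2) → Bool) :
    boolRank 3 X = natRank 3 X := by
  unfold boolRank natRank
  congr 1
  ext R
  exact ⟨fun h => cover_mem X R h, fun h => part_mem X R h⟩
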